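/- arXiv:2201.04040 — 6 statements merged into one kernel-verified Lean document; each statement's English description precedes it below -/
import Mathlib

section
/- If f : ℝ^d → ℝ is L-smooth and μ-strongly convex (0 < μ ≤ L) with gradient ∇f, then for all x, y: f(x) ≥ f(y) + ⟪∇f(y), x - y⟫ + (1/(2L))‖∇f(x) - ∇f(y)‖² + (μL/(2(L-μ)))‖x - y - (1/L)(∇f(x) - ∇f(y))‖² (when μ < L). -/
/-!
Subtracting `μ/2 ‖·‖²` turns `f` into a convex, `(L - μ)`-smooth function `h` with gradient
`g - μ • id`. For such an `h`, comparing `h` at `x`, `y` and the gradient step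
`z = x - (L - μ)⁻¹ • (∇h x - ∇h y)` gives the co-coercivity bound
`h x ≥ h y + ⟪∇h y, x - y⟫ + ‖∇h x - ∇h y‖² / (2 (L - μ))`.
Adding the quadratic back and regrouping the squares yields the stated inequality.
-/

open RealInnerProductSpace

variable {E : Type*} [NormedAddCommGroup E] [InnerProductSpace ℝ E]

/-- The Bregman divergence of `f`, with `g` in the role of `∇f` (no relation between them is assumed). -/
def bregmanGap (f : E → ℝ) (g : E → E) (x y : E) : ℝ :=
  f x - f y - ⟪g y, x - y⟫

lemma bregmanGap_sub_half_sq_norm (f : E → ℝ) (g : E → E) (c : ℝ) (x y : E) :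
    bregmanGap (fun p => f p - c / 2 * ‖p‖ ^ 2) (fun p => g p - c • p) x y
      = bregmanGap f g x y - c / 2 * ‖x - y‖ ^ 2 := by
  simp only [bregmanGap, inner_sub_left, inner_sub_right, real_inner_smul_left,
    real_inner_self_eq_norm_sq, norm_sub_sq_real, real_inner_comm x y]
  ring

lemma bregmanGap_three_point (f : E → ℝ) (g : E → E) (x y z : E) :
    bregmanGap f g x y = bregmanGap f g z y - bregmanGap f g z x + ⟪g x - g y, x - z⟫ := by
  simp only [bregmanGap, inner_sub_left, inner_sub_right]
  ring

/-- Co-coercivity of the gradient of a convex `ℓ`-smooth function. -/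
lemma bregmanGap_ge_of_convex_of_smooth {f : E → ℝ} {g : E → E} {ℓ : ℝ} (hℓ : 0 < ℓ)
    (hconv : ∀ x y, 0 ≤ bregmanGap f g x y)
    (hsmooth : ∀ x y, bregmanGap f g x y ≤ ℓ / 2 * ‖x - y‖ ^ 2) (x y : E) :
    1 / (2 * ℓ) * ‖g x - g y‖ ^ 2 ≤ bregmanGap f g x y := by
  set v := g x - g y
  set z := x - ℓ⁻¹ • v
  have hxz : x - z = ℓ⁻¹ • v := sub_sub_cancel x _
  have hzx : ‖z - x‖ ^ 2 = ℓ⁻¹ ^ 2 * ‖v‖ ^ 2 := by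
    rw [← norm_neg, neg_sub, hxz, norm_smul, mul_pow, Real.norm_eq_abs, sq_abs]
  have hinner : ⟪v, x - z⟫ = ℓ⁻¹ * ‖v‖ ^ 2 := by
    rw [hxz, real_inner_smul_right, real_inner_self_eq_norm_sq]
  have hupper : bregmanGap f g z x ≤ 1 / (2 * ℓ) * ‖v‖ ^ 2 := by
    calc bregmanGap f g z x ≤ ℓ / 2 * ‖z - x‖ ^ 2 := hsmooth z x
      _ = 1 / (2 * ℓ) * ‖v‖ ^ 2 := by rw [hzx]; field_simp
  rw [bregmanGap_three_point f g x y z, hinner]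
  have hv : 1 / (2 * ℓ) * ‖v‖ ^ 2 = ℓ⁻¹ * ‖v‖ ^ 2 - 1 / (2 * ℓ) * ‖v‖ ^ 2 := by
    field_simp; ring
  linarith [hconv z y]

lemma bregmanGap_ge_of_stronglyConvex_of_smooth {f : E → ℝ} {g : E → E} {μ L : ℝ} (hμL : μ < L)
    (hsc : ∀ x y, μ / 2 * ‖x - y‖ ^ 2 ≤ bregmanGap f g x y)
    (hsmooth : ∀ x y, bregmanGap f g x y ≤ L / 2 * ‖x - y‖ ^ 2) (x y : E) :
    1 / (2 * (L - μ)) * ‖g x - g y - μ • (x - y)‖ ^ 2 + μ / 2 * ‖x - y‖ ^ 2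
      ≤ bregmanGap f g x y := by
  have key := bregmanGap_ge_of_convex_of_smooth (sub_pos.2 hμL)
    (fun x y => by rw [bregmanGap_sub_half_sq_norm f g μ]; linarith [hsc x y])
    (fun x y => by rw [bregmanGap_sub_half_sq_norm f g μ]; linarith [hsmooth x y]) x y
  rw [bregmanGap_sub_half_sq_norm, sub_sub_sub_comm, ← smul_sub] at key
  linarith

lemma norm_sub_smul_sq_regroup (a b : E) {μ L : ℝ} (hL : L ≠ 0) (hμL : L - μ ≠ 0) :
    1 / (2 * (L - μ)) * ‖b - μ • a‖ ^ 2 + μ / 2 * ‖a‖ ^ 2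
      = 1 / (2 * L) * ‖b‖ ^ 2 + μ * L / (2 * (L - μ)) * ‖a - (1 / L) • b‖ ^ 2 := by
  simp only [norm_sub_sq_real, norm_smul, mul_pow, Real.norm_eq_abs, sq_abs,
    real_inner_smul_right, real_inner_comm a b]
  field_simp
  ring

theorem interpolation_necessity_general
    (d : ℕ) (μ L : ℝ) (hμ : 0 < μ) (hμL : μ < L)
    (f : EuclideanSpace ℝ (Fin d) → ℝ) (g : EuclideanSpace ℝ (Fin d) → EuclideanSpace ℝ (Fin d))
    (hsmooth : ∀ x y, f x ≤ f y + ⟪g y, x - y⟫ + L / 2 * ‖x - y‖ ^ 2)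
    (hsc : ∀ x y, f x ≥ f y + ⟪g y, x - y⟫ + μ / 2 * ‖x - y‖ ^ 2) :
    ∀ x y, f x ≥ f y + ⟪g y, x - y⟫ + 1 / (2 * L) * ‖g x - g y‖ ^ 2
      + μ * L / (2 * (L - μ)) * ‖x - y - (1 / L) • (g x - g y)‖ ^ 2 := by
  intro x y
  have key := bregmanGap_ge_of_stronglyConvex_of_smooth (f := f) (g := g) hμL
    (fun x y => by unfold bregmanGap; linarith [hsc x y])
    (fun x y => by unfold bregmanGap; linarith [hsmooth x y]) x y
  rw [norm_sub_smul_sq_regroup _ _ (hμ.trans hμL).ne' (sub_pos.2 hμL).ne'] at key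
  unfold bregmanGap at key
  linarith

theorem interpolation_necessity
    (d : ℕ) (μ L : ℝ) (hμ : 0 < μ) (hμL : μ < L)
    (f : EuclideanSpace ℝ (Fin d) → ℝ) (g : EuclideanSpace ℝ (Fin d) → EuclideanSpace ℝ (Fin d))
    (hdiff : ∀ x, HasGradientAt f (g x) x)
    (hsmooth : ∀ x y, f x ≤ f y + ⟪g y, x - y⟫ + L / 2 * ‖x - y‖ ^ 2)
    (hsc : ∀ x y, f x ≥ f y + ⟪g y, x - y⟫ + μ / 2 * ‖x - y‖ ^ 2) :
    ∀ x y, f x ≥ f y + ⟪g y, x - y⟫ + 1 / (2 * L) * ‖g x - g y‖ ^ 2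
      + μ * L / (2 * (L - μ)) * ‖x - y - (1 / L) • (g x - g y)‖ ^ 2 :=
  interpolation_necessity_general d μ L hμ hμL f g hsmooth hsc
end

section
/- Let f be L-smooth and μ-strongly convex with 0 < μ ≤ L, and γ > 0. If x₁ = x₀ - γ∇f(x₀) and y₁ = y₀ - γ∇f(y₀), then ‖x₁ - y₁‖² ≤ max{(1 - Lγ)², (1 - μγ)²} · ‖x₀ - y₀‖². -/
open RealInnerProductSpace Filter Topology

/-!
Put `w = x₀ - y₀` and `h = ∇f(x₀) - ∇f(y₀)`, so that
`‖x₁ - y₁‖² = ‖w‖² - 2γ⟪h, w⟫ + γ²‖h‖²`. The two quadratic bounds give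
`μ‖w‖² ≤ ⟪h, w⟫ ≤ L‖w‖²`, and co-coercivity of the convex, `(L - μ)`-smooth function
`f - μ/2 ‖·‖²` gives the interpolation inequality `μL‖w‖² + ‖h‖² ≤ (μ + L)⟪h, w⟫`.
With `c = γ(2 - γ(μ + L))`,
`(1 - μγ)²‖w‖² - ‖x₁ - y₁‖² = c(⟪h, w⟫ - μ‖w‖²) + γ²σ` and
`(1 - Lγ)²‖w‖² - ‖x₁ - y₁‖² = -c(L‖w‖² - ⟪h, w⟫) + γ²σ`, where `σ ≥ 0` is the slack of the
interpolation inequality, so one of the two right-hand sides is nonnegative according to the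
sign of `c`.
-/

variable {E : Type*} [NormedAddCommGroup E] [InnerProductSpace ℝ E]

def QuadraticUpperBound (f : E → ℝ) (g : E → E) (L : ℝ) : Prop :=
  ∀ x y, f x ≤ f y + ⟪g y, x - y⟫ + L / 2 * ‖x - y‖ ^ 2

def QuadraticLowerBound (f : E → ℝ) (g : E → E) (μ : ℝ) : Prop :=
  ∀ x y, f y + ⟪g y, x - y⟫ + μ / 2 * ‖x - y‖ ^ 2 ≤ f x

lemma sq_norm_eq_sq_norm_add_inner_add (x y : E) :
    ‖x‖ ^ 2 = ‖y‖ ^ 2 + 2 * ⟪y, x - y⟫ + ‖x - y‖ ^ 2 := by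
  simpa using norm_add_sq_real y (x - y)

lemma norm_sub_smul_sq (w h : E) (γ : ℝ) :
    ‖w - γ • h‖ ^ 2 = ‖w‖ ^ 2 - 2 * γ * ⟪h, w⟫ + γ ^ 2 * ‖h‖ ^ 2 := by
  rw [norm_sub_sq_real, real_inner_smul_right, norm_smul, mul_pow, Real.norm_eq_abs, sq_abs,
    real_inner_comm]
  ring

namespace QuadraticUpperBound

variable {f : E → ℝ} {g : E → E} {L : ℝ}

lemma mono (hf : QuadraticUpperBound f g L) {L' : ℝ} (hL : L ≤ L') :
    QuadraticUpperBound f g L' :=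
  fun x y => (hf x y).trans (by gcongr)

lemma inner_sub_le (hf : QuadraticUpperBound f g L) (x y : E) :
    ⟪g x - g y, x - y⟫ ≤ L * ‖x - y‖ ^ 2 := by
  have hxy := hf x y
  have hyx := hf y x
  rw [norm_sub_rev, ← neg_sub x y, inner_neg_right] at hyx
  rw [inner_sub_left]
  linarith

lemma sub_sq_norm (hf : QuadraticUpperBound f g L) (c : ℝ) :
    QuadraticUpperBound (fun z => f z - c / 2 * ‖z‖ ^ 2) (fun z => g z - c • z) (L - c) := by
  intro x y
  have hxy := hf x y
  have hsq := sq_norm_eq_sq_norm_add_inner_add x y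
  simp only [inner_sub_left, real_inner_smul_left]
  linear_combination hxy - c / 2 * hsq

end QuadraticUpperBound

namespace QuadraticLowerBound

variable {f : E → ℝ} {g : E → E} {μ : ℝ}

lemma le_inner_sub (hf : QuadraticLowerBound f g μ) (x y : E) :
    μ * ‖x - y‖ ^ 2 ≤ ⟪g x - g y, x - y⟫ := by
  have hxy := hf x y
  have hyx := hf y x
  rw [norm_sub_rev, ← neg_sub x y, inner_neg_right] at hyx
  rw [inner_sub_left]
  linarith

lemma sub_sq_norm (hf : QuadraticLowerBound f g μ) (c : ℝ) :
    QuadraticLowerBound (fun z => f z - c / 2 * ‖z‖ ^ 2) (fun z => g z - c • z) (μ - c) := by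
  intro x y
  have hxy := hf x y
  have hsq := sq_norm_eq_sq_norm_add_inner_add x y
  simp only [inner_sub_left, real_inner_smul_left]
  linear_combination hxy + c / 2 * hsq

end QuadraticLowerBound

section CoCoercivity

variable {f : E → ℝ} {g : E → E} {L : ℝ}

/-- Convexity at `x - L⁻¹ (g x - g y)` combined with smoothness at `x`. -/
lemma add_sq_norm_grad_sub_le (hconv : QuadraticLowerBound f g 0)
    (hsmooth : QuadraticUpperBound f g L) (hL : 0 < L) (x y : E) :
    f y + ⟪g y, x - y⟫ + 1 / (2 * L) * ‖g x - g y‖ ^ 2 ≤ f x := by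
  set u := g x - g y
  have hconv' := hconv (x - L⁻¹ • u) y
  have hsmooth' := hsmooth (x - L⁻¹ • u) x
  rw [sub_right_comm, inner_sub_right, real_inner_smul_right] at hconv'
  rw [sub_sub_cancel_left, norm_neg, norm_smul, inner_neg_right, real_inner_smul_right,
    Real.norm_eq_abs, abs_of_pos (inv_pos.2 hL)] at hsmooth'
  have hu : ⟪g x, u⟫ - ⟪g y, u⟫ = ‖u‖ ^ 2 := by
    rw [← inner_sub_left, real_inner_self_eq_norm_sq]
  have hcoef : L / 2 * (L⁻¹ * ‖u‖) ^ 2 = L⁻¹ * ‖u‖ ^ 2 - 1 / (2 * L) * ‖u‖ ^ 2 := by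
    field_simp
    ring
  linear_combination hconv' + hsmooth' - L⁻¹ * hu + hcoef

lemma sq_norm_grad_sub_le_of_pos (hconv : QuadraticLowerBound f g 0)
    (hsmooth : QuadraticUpperBound f g L) (hL : 0 < L) (x y : E) :
    ‖g x - g y‖ ^ 2 ≤ L * ⟪g x - g y, x - y⟫ := by
  have hxy := add_sq_norm_grad_sub_le hconv hsmooth hL x y
  have hyx := add_sq_norm_grad_sub_le hconv hsmooth hL y x
  rw [norm_sub_rev, ← neg_sub x y, inner_neg_right] at hyx
  have hhalf : 1 / (2 * L) + 1 / (2 * L) = 1 / L := by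
    field_simp
    ring
  have hsum : 1 / L * ‖g x - g y‖ ^ 2 ≤ ⟪g x - g y, x - y⟫ := by
    rw [inner_sub_left]
    linear_combination hxy + hyx + ‖g x - g y‖ ^ 2 * hhalf
  rwa [one_div_mul_eq_div, div_le_iff₀' hL] at hsum

/-- Co-coercivity; the case `L = 0` is the limit of the cases `L + ε`. -/
lemma sq_norm_grad_sub_le (hconv : QuadraticLowerBound f g 0)
    (hsmooth : QuadraticUpperBound f g L) (hL : 0 ≤ L) (x y : E) :
    ‖g x - g y‖ ^ 2 ≤ L * ⟪g x - g y, x - y⟫ := by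
  have hlim : Tendsto (fun ε => (L + ε) * ⟪g x - g y, x - y⟫) (𝓝[>] 0)
      (𝓝 (L * ⟪g x - g y, x - y⟫)) := by
    refine tendsto_nhdsWithin_of_tendsto_nhds ?_
    simpa using ((continuous_const.add continuous_id).mul continuous_const).tendsto
      (0 : ℝ) (f := fun ε : ℝ => (L + ε) * ⟪g x - g y, x - y⟫)
  refine ge_of_tendsto hlim (eventually_nhdsWithin_of_forall fun ε (hε : 0 < ε) => ?_)
  exact sq_norm_grad_sub_le_of_pos hconv (hsmooth.mono (by linarith)) (by linarith) x y

end CoCoercivity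

lemma QuadraticLowerBound.interpolation_inequality {f : E → ℝ} {g : E → E} {μ L : ℝ}
    (hsc : QuadraticLowerBound f g μ) (hsmooth : QuadraticUpperBound f g L) (hμL : μ ≤ L)
    (x y : E) :
    μ * L * ‖x - y‖ ^ 2 + ‖g x - g y‖ ^ 2 ≤ (μ + L) * ⟪g x - g y, x - y⟫ := by
  have hconv := hsc.sub_sq_norm μ
  rw [sub_self] at hconv
  have hcoco := sq_norm_grad_sub_le hconv (hsmooth.sub_sq_norm μ) (sub_nonneg.2 hμL) x y
  rw [sub_sub_sub_comm, ← smul_sub, norm_sub_smul_sq, inner_sub_left (g x - g y),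
    real_inner_smul_left, real_inner_self_eq_norm_sq, real_inner_comm] at hcoco
  linear_combination hcoco

lemma sq_sub_add_le_max {μ L γ s a b : ℝ} (hs : 0 ≤ s) (hμa : μ * s ≤ a) (haL : a ≤ L * s)
    (hinterp : μ * L * s + b ≤ (μ + L) * a) :
    s - 2 * γ * a + γ ^ 2 * b ≤ max ((1 - L * γ) ^ 2) ((1 - μ * γ) ^ 2) * s := by
  have hslack := mul_le_mul_of_nonneg_left hinterp (sq_nonneg γ)
  rcases le_total 0 (γ * (2 - γ * (μ + L))) with hc | hc
  · calc s - 2 * γ * a + γ ^ 2 * b ≤ (1 - μ * γ) ^ 2 * s := by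
          linear_combination mul_nonneg hc (sub_nonneg.2 hμa) + hslack
      _ ≤ _ := by gcongr; exact le_max_right _ _
  · calc s - 2 * γ * a + γ ^ 2 * b ≤ (1 - L * γ) ^ 2 * s := by
          linear_combination mul_nonneg_of_nonpos_of_nonpos hc (sub_nonpos.2 haL) + hslack
      _ ≤ _ := by gcongr; exact le_max_left _ _

theorem gd_one_step_contraction_general
    (d : ℕ) (μ L γ : ℝ) (hμL : μ ≤ L)
    (f : EuclideanSpace ℝ (Fin d) → ℝ) (g : EuclideanSpace ℝ (Fin d) → EuclideanSpace ℝ (Fin d))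
    (hsmooth : ∀ x y, f x ≤ f y + ⟪g y, x - y⟫ + L / 2 * ‖x - y‖ ^ 2)
    (hsc : ∀ x y, f x ≥ f y + ⟪g y, x - y⟫ + μ / 2 * ‖x - y‖ ^ 2)
    (x₀ y₀ x₁ y₁ : EuclideanSpace ℝ (Fin d))
    (hx : x₁ = x₀ - γ • g x₀) (hy : y₁ = y₀ - γ • g y₀) :
    ‖x₁ - y₁‖ ^ 2 ≤ max ((1 - L * γ) ^ 2) ((1 - μ * γ) ^ 2) * ‖x₀ - y₀‖ ^ 2 := by
  have hsmooth : QuadraticUpperBound f g L := hsmooth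
  have hsc : QuadraticLowerBound f g μ := hsc
  rw [hx, hy, sub_sub_sub_comm, ← smul_sub, norm_sub_smul_sq]
  exact sq_sub_add_le_max (sq_nonneg _) (hsc.le_inner_sub x₀ y₀) (hsmooth.inner_sub_le x₀ y₀)
    (hsc.interpolation_inequality hsmooth hμL x₀ y₀)

theorem gd_one_step_contraction
    (d : ℕ) (μ L γ : ℝ) (hμ : 0 < μ) (hμL : μ ≤ L) (hγ : 0 < γ)
    (f : EuclideanSpace ℝ (Fin d) → ℝ) (g : EuclideanSpace ℝ (Fin d) → EuclideanSpace ℝ (Fin d))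
    (hsmooth : ∀ x y, f x ≤ f y + ⟪g y, x - y⟫ + L / 2 * ‖x - y‖ ^ 2)
    (hsc : ∀ x y, f x ≥ f y + ⟪g y, x - y⟫ + μ / 2 * ‖x - y‖ ^ 2)
    (x₀ y₀ x₁ y₁ : EuclideanSpace ℝ (Fin d))
    (hx : x₁ = x₀ - γ • g x₀) (hy : y₁ = y₀ - γ • g y₀) :
    ‖x₁ - y₁‖ ^ 2 ≤ max ((1 - L * γ) ^ 2) ((1 - μ * γ) ^ 2) * ‖x₀ - y₀‖ ^ 2 :=
  gd_one_step_contraction_general d μ L γ hμL f g hsmooth hsc x₀ y₀ x₁ y₁ hx hy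
end

section
/- For 0 < μ ≤ L and γ = 2/(L+μ), the one-step gradient descent contraction factor equals ((L-μ)/(L+μ))², i.e., max{(1-Lγ)², (1-μγ)²} = ((L-μ)/(L+μ))², and this value of γ minimizes γ ↦ max{(1-Lγ)², (1-μγ)²} over γ ∈ ℝ. -/
/-! Writing `a - b = a (1 - bγ) - b (1 - aγ)` shows that for `a, b ≥ 0` no step-size `γ` can
make both `|1 - aγ|` and `|1 - bγ|` smaller than `|a - b| / (a + b)`. The step-size
`γ = 2 / (a + b)` attains this bound, since it makes `1 - aγ` and `1 - bγ` opposite numbers. -/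

section StepSize

variable {a b : ℝ}

theorem abs_sub_le_add_mul_max_abs_one_sub_mul (ha : 0 ≤ a) (hb : 0 ≤ b) (γ : ℝ) :
    |a - b| ≤ (a + b) * max |1 - a * γ| |1 - b * γ| :=
  calc |a - b| = |a * (1 - b * γ) - b * (1 - a * γ)| := by ring_nf
    _ ≤ |a * (1 - b * γ)| + |b * (1 - a * γ)| := abs_sub _ _
    _ = a * |1 - b * γ| + b * |1 - a * γ| := by
        rw [abs_mul, abs_mul, abs_of_nonneg ha, abs_of_nonneg hb]
    _ ≤ a * max |1 - a * γ| |1 - b * γ| + b * max |1 - a * γ| |1 - b * γ| := by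
        gcongr
        exacts [le_max_right _ _, le_max_left _ _]
    _ = (a + b) * max |1 - a * γ| |1 - b * γ| := by ring

theorem abs_sub_div_add_le_max_abs_one_sub_mul (ha : 0 ≤ a) (hb : 0 ≤ b) (γ : ℝ) :
    |(a - b) / (a + b)| ≤ max |1 - a * γ| |1 - b * γ| := by
  rw [abs_div, abs_of_nonneg (add_nonneg ha hb)]
  exact div_le_of_le_mul₀ (add_nonneg ha hb) (le_max_of_le_left (abs_nonneg _))
    ((abs_sub_le_add_mul_max_abs_one_sub_mul ha hb γ).trans_eq (mul_comm _ _))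

theorem sq_sub_div_add_le_max_sq_one_sub_mul (ha : 0 ≤ a) (hb : 0 ≤ b) (γ : ℝ) :
    ((a - b) / (a + b)) ^ 2 ≤ max ((1 - a * γ) ^ 2) ((1 - b * γ) ^ 2) := by
  rcases le_max_iff.mp (abs_sub_div_add_le_max_abs_one_sub_mul ha hb γ) with h | h
  · exact le_max_of_le_left (sq_le_sq.mpr h)
  · exact le_max_of_le_right (sq_le_sq.mpr h)

theorem max_sq_one_sub_mul_two_div_add (hab : a + b ≠ 0) :
    max ((1 - a * (2 / (a + b))) ^ 2) ((1 - b * (2 / (a + b))) ^ 2) = ((a - b) / (a + b)) ^ 2 := by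
  have ha : 1 - a * (2 / (a + b)) = -((a - b) / (a + b)) := by field_simp; ring
  have hb : 1 - b * (2 / (a + b)) = (a - b) / (a + b) := by field_simp; ring
  rw [ha, hb, neg_sq, max_self]

end StepSize

theorem optimal_stepsize_contraction
    (μ L : ℝ) (hμ : 0 < μ) (hμL : μ ≤ L) :
    max ((1 - L * (2 / (L + μ))) ^ 2) ((1 - μ * (2 / (L + μ))) ^ 2)
      = ((L - μ) / (L + μ)) ^ 2 ∧
    ∀ γ : ℝ, ((L - μ) / (L + μ)) ^ 2 ≤ max ((1 - L * γ) ^ 2) ((1 - μ * γ) ^ 2) := by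
  have hL : 0 ≤ L := hμ.le.trans hμL
  exact ⟨max_sq_one_sub_mul_two_div_add (by linarith),
    sq_sub_div_add_le_max_sq_one_sub_mul hL hμ.le⟩
end

section
/- Let f be L-smooth and convex with minimizer x⋆, and consider the accelerated gradient method with constant momentum for a μ-strongly convex, L-smooth f (0 < μ ≤ L): y₀ = x₀, x_{t+1} = y_t - (1/L)∇f(y_t), y_{t+1} = x_{t+1} + ((1-√(μ/L))/(1+√(μ/L)))(x_{t+1} - x_t). Then for all n, f(xₙ) - f(x⋆) ≤ (1 - √(μ/L))^n (f(x₀) - f(x⋆) + (μ/2)‖x₀ - x⋆‖²). -/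
/-!
With `s = √(μ/L)`, the potential `Φ_t = f x_t - f x⋆ + μ/2 ‖z_t - x⋆‖²`, where
`z_t = y_t + s⁻¹ (y_t - x_t)`, contracts by the factor `1 - s` at every iteration: the momentum
coefficient `(1 - s)/(1 + s)` is exactly what makes `z_{t+1} = (1 - s) z_t + s (y_t - μ⁻¹ ∇f(y_t))`,
and then `(1 - s) Φ_t - Φ_{t+1}` is the sum of the descent-lemma gap at `y_t`, `s` times the
strong-convexity gap between `y_t` and `x⋆`, `1 - s` times the one between `y_t` and `x_t`, and a
nonnegative multiple of `‖z_t - y_t‖²`. Since `z_0 = x_0` and `f x_n - f x⋆ ≤ Φ_n`, the bound follows.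
-/

open RealInnerProductSpace

section

variable {E : Type*} [NormedAddCommGroup E]

noncomputable def nesterovPotential (f : E → ℝ) (μ : ℝ) (xs x z : E) : ℝ :=
  f x - f xs + μ / 2 * ‖z - xs‖ ^ 2

theorem sub_le_nesterovPotential {f : E → ℝ} {μ : ℝ} (hμ : 0 ≤ μ) (xs x z : E) :
    f x - f xs ≤ nesterovPotential f μ xs x z :=
  le_add_of_nonneg_right (by positivity)

variable [InnerProductSpace ℝ E] {f : E → ℝ} {g : E → E} {μ L s : ℝ}

theorem gradient_step_descent
    (hsmooth : ∀ x y, f x ≤ f y + ⟪g y, x - y⟫ + L / 2 * ‖x - y‖ ^ 2) (y : E) :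
    f (y - (1 / L) • g y) ≤ f y - 1 / (2 * L) * ‖g y‖ ^ 2 := by
  have h := hsmooth (y - (1 / L) • g y) y
  rw [sub_sub_cancel_left, inner_neg_right, real_inner_smul_right, norm_neg, norm_smul,
    real_inner_self_eq_norm_sq, Real.norm_eq_abs, mul_pow, sq_abs] at h
  convert h using 1
  rcases eq_or_ne L 0 with rfl | hL
  · simp
  · field_simp
    ring

theorem nesterovPotential_step_le
    (hsmooth : ∀ x y, f x ≤ f y + ⟪g y, x - y⟫ + L / 2 * ‖x - y‖ ^ 2)
    (hsc : ∀ x y, f x ≥ f y + ⟪g y, x - y⟫ + μ / 2 * ‖x - y‖ ^ 2)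
    (hμ : 0 < μ) (hs₀ : 0 < s) (hs₁ : s ≤ 1) (hs : s ^ 2 = μ / L)
    (xs x y z : E) (hyz : y - x = s • (z - y)) :
    nesterovPotential f μ xs (y - (1 / L) • g y) ((1 - s) • z + s • (y - (1 / μ) • g y))
      ≤ (1 - s) * nesterovPotential f μ xs x z := by
  have hdesc := gradient_step_descent hsmooth y
  have hstar := hsc xs y
  have hprev := hsc x y
  set G := g y
  set a := y - xs
  set w := z - y
  have hxs : xs - y = -a := (neg_sub _ _).symm
  have hx : x - y = -(s • w) := by rw [← hyz, neg_sub]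
  have hz : z - xs = a + w := by simp [a, w]
  have hz' : (1 - s) • z + s • (y - (1 / μ) • G) - xs = a + (1 - s) • w - (s / μ) • G := by
    simp only [a, w]
    module
  rw [hxs] at hstar
  rw [hx] at hprev
  unfold nesterovPotential
  rw [hz, hz']
  simp only [norm_add_sq_real, norm_sub_sq_real, norm_smul, norm_neg, inner_add_left,
    inner_neg_right, real_inner_smul_left, real_inner_smul_right, Real.norm_eq_abs, mul_pow,
    sq_abs] at hstar hprev ⊢
  rw [real_inner_comm a G] at hstar
  rw [real_inner_comm w G] at hprev
  have hk : μ * (s / μ) = s := mul_div_cancel₀ s hμ.ne'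
  have hk2 : μ * (s / μ) ^ 2 = 1 / L := by
    rw [div_pow, hs]
    field_simp
  have hrem : 0 ≤ μ * s * (1 - s ^ 2) / 2 * ‖w‖ ^ 2 := by
    have : 0 ≤ 1 - s ^ 2 := by nlinarith
    positivity
  linear_combination hdesc + s * hstar + (1 - s) * hprev + hrem
    - (⟪a, G⟫ + (1 - s) * ⟪w, G⟫) * hk + ‖G‖ ^ 2 / 2 * hk2

theorem nesterovPotential_le_pow
    (hsmooth : ∀ x y, f x ≤ f y + ⟪g y, x - y⟫ + L / 2 * ‖x - y‖ ^ 2)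
    (hsc : ∀ x y, f x ≥ f y + ⟪g y, x - y⟫ + μ / 2 * ‖x - y‖ ^ 2)
    (hμ : 0 < μ) (hs₀ : 0 < s) (hs₁ : s ≤ 1) (hs : s ^ 2 = μ / L)
    (xs : E) (x y : ℕ → E) (hy0 : y 0 = x 0)
    (hx : ∀ t, x (t + 1) = y t - (1 / L) • g (y t))
    (hy : ∀ t, y (t + 1) = x (t + 1) + ((1 - s) / (1 + s)) • (x (t + 1) - x t)) (n : ℕ) :
    nesterovPotential f μ xs (x n) (y n + s⁻¹ • (y n - x n))
      ≤ (1 - s) ^ n * nesterovPotential f μ xs (x 0) (x 0) := by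
  set z : ℕ → E := fun t ↦ y t + s⁻¹ • (y t - x t) with hz
  have hL : L ≠ 0 := by
    rintro rfl
    rw [div_zero] at hs
    exact hs₀.ne' (pow_eq_zero_iff two_ne_zero |>.1 hs)
  have hyz (t : ℕ) : y t - x t = s • (z t - y t) := by
    simp only [hz, add_sub_cancel_left, smul_smul, mul_inv_cancel₀ hs₀.ne', one_smul]
  have hz_succ (t : ℕ) : z (t + 1) = (1 - s) • z t + s • (y t - (1 / μ) • g (y t)) := by
    have hLμ : 1 / L = s ^ 2 / μ := by
      rw [hs]
      field_simp
    simp only [hz, hy t, hx t, hLμ]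
    match_scalars <;> field_simp <;> ring
  have hz0 : z 0 = x 0 := by simp [hz, hy0]
  have hdecay : ∀ t < n, nesterovPotential f μ xs (x (t + 1)) (z (t + 1))
      ≤ (1 - s) * nesterovPotential f μ xs (x t) (z t) := fun t _ ↦ by
    rw [hz_succ, hx]
    exact nesterovPotential_step_le hsmooth hsc hμ hs₀ hs₁ hs xs (x t) (y t) (z t) (hyz t)
  simpa only [hz0] using le_geom (u := fun t ↦ nesterovPotential f μ xs (x t) (z t))
    (sub_nonneg.2 hs₁) n hdecay

end

theorem accelerated_gradient_rate_general
    (d : ℕ) (μ L : ℝ) (hμ : 0 < μ) (hμL : μ ≤ L)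
    (f : EuclideanSpace ℝ (Fin d) → ℝ) (g : EuclideanSpace ℝ (Fin d) → EuclideanSpace ℝ (Fin d))
    (hsmooth : ∀ x y, f x ≤ f y + ⟪g y, x - y⟫ + L / 2 * ‖x - y‖ ^ 2)
    (hsc : ∀ x y, f x ≥ f y + ⟪g y, x - y⟫ + μ / 2 * ‖x - y‖ ^ 2)
    (xs : EuclideanSpace ℝ (Fin d))
    (x y : ℕ → EuclideanSpace ℝ (Fin d))
    (hy0 : y 0 = x 0)
    (hx : ∀ t, x (t + 1) = y t - (1 / L) • g (y t))
    (hy : ∀ t, y (t + 1) = x (t + 1)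
      + ((1 - Real.sqrt (μ / L)) / (1 + Real.sqrt (μ / L))) • (x (t + 1) - x t)) :
    ∀ n, f (x n) - f xs
      ≤ (1 - Real.sqrt (μ / L)) ^ n * (f (x 0) - f xs + μ / 2 * ‖x 0 - xs‖ ^ 2) := by
  intro n
  have hL : 0 < L := hμ.trans_le hμL
  have hs₀ : 0 < Real.sqrt (μ / L) := Real.sqrt_pos.2 (div_pos hμ hL)
  have hs₁ : Real.sqrt (μ / L) ≤ 1 := Real.sqrt_le_one.2 ((div_le_one hL).2 hμL)
  have hs : Real.sqrt (μ / L) ^ 2 = μ / L := Real.sq_sqrt (div_pos hμ hL).le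
  exact (sub_le_nesterovPotential hμ.le xs (x n) _).trans
    (nesterovPotential_le_pow hsmooth hsc hμ hs₀ hs₁ hs xs x y hy0 hx hy n)

theorem accelerated_gradient_rate
    (d : ℕ) (μ L : ℝ) (hμ : 0 < μ) (hμL : μ ≤ L)
    (f : EuclideanSpace ℝ (Fin d) → ℝ) (g : EuclideanSpace ℝ (Fin d) → EuclideanSpace ℝ (Fin d))
    (hsmooth : ∀ x y, f x ≤ f y + ⟪g y, x - y⟫ + L / 2 * ‖x - y‖ ^ 2)
    (hsc : ∀ x y, f x ≥ f y + ⟪g y, x - y⟫ + μ / 2 * ‖x - y‖ ^ 2)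
    (xs : EuclideanSpace ℝ (Fin d)) (hstar : g xs = 0)
    (x y : ℕ → EuclideanSpace ℝ (Fin d))
    (hy0 : y 0 = x 0)
    (hx : ∀ t, x (t + 1) = y t - (1 / L) • g (y t))
    (hy : ∀ t, y (t + 1) = x (t + 1)
      + ((1 - Real.sqrt (μ / L)) / (1 + Real.sqrt (μ / L))) • (x (t + 1) - x t)) :
    ∀ n, f (x n) - f xs
      ≤ (1 - Real.sqrt (μ / L)) ^ n * (f (x 0) - f xs + μ / 2 * ‖x 0 - xs‖ ^ 2) :=
  accelerated_gradient_rate_general d μ L hμ hμL f g hsmooth hsc xs x y hy0 hx hy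
end

section
/- Sufficiency direction of interpolation for finite data with two points: let (x₁, g₁, f₁) and (x₂, g₂, f₂) with xᵢ, gᵢ ∈ ℝ^d, fᵢ ∈ ℝ, satisfy for both ordered pairs (i,j), i ≠ j: fᵢ ≥ fⱼ + ⟪gⱼ, xᵢ - xⱼ⟫ + (1/(2L))‖gᵢ - gⱼ‖² with L > 0 (the μ = 0 interpolation conditions). Then there exists a convex function F : ℝ^d → ℝ, differentiable with L-Lipschitz gradient, such that F(xᵢ) = fᵢ and ∇F(xᵢ) = gᵢ for i = 1, 2. -/
/-!
Let `v = g₂ - g₁` and `c = ‖v‖² / L`. The interpolant is the affine function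
`f₁ + ⟪g₁, · - x₁⟫` plus a Huber-smoothed ramp of width `c` in the direction `v`.
Its gradient moves only along `v`, through the ramp's slope, which is `c⁻¹`-Lipschitz,
so the gradient is `c⁻¹ ‖v‖² = L`-Lipschitz. The offset of the ramp is chosen so that
the first interpolation inequality puts `x₁` on its flat part and the second puts `x₂`
on its linear part. When `g₁ = g₂` the two inequalities force the data onto a single
affine function.
-/

open RealInnerProductSpace Set

theorem hasDerivAt_sq_max_zero (u : ℝ) :
    HasDerivAt (fun t : ℝ => max t 0 ^ 2) (2 * max u 0) u := by
  rw [hasDerivAt_iff_isLittleO_nhds_zero]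
  refine Asymptotics.IsBigO.trans_isLittleO ?_ (Asymptotics.isLittleO_pow_id one_lt_two)
  refine Asymptotics.IsBigO.of_bound 1 (Filter.Eventually.of_forall fun h => ?_)
  rw [Real.norm_eq_abs, Real.norm_eq_abs, one_mul, abs_of_nonneg (sq_nonneg h), abs_le]
  rcases le_total u 0 with hu | hu <;> rcases le_total (u + h) 0 with huh | huh <;>
    simp only [max_eq_left, max_eq_right, hu, huh, smul_eq_mul] <;> constructor <;> nlinarith

/-- For `c > 0`: `0` on `(-∞, 0]`, `u ^ 2 / (2 * c)` on `[0, c]` and `u - c / 2` on `[c, ∞)`. -/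
noncomputable def smoothRamp (c u : ℝ) : ℝ := (max u 0 ^ 2 - max (u - c) 0 ^ 2) / (2 * c)

noncomputable def smoothRampDeriv (c u : ℝ) : ℝ := min (max u 0) c / c

section SmoothRamp

variable {c : ℝ}

theorem max_zero_sub_max_sub_zero (hc : 0 ≤ c) (u : ℝ) :
    max u 0 - max (u - c) 0 = min (max u 0) c := by
  rcases le_total u c with h | h
  · rw [max_eq_right (by linarith : u - c ≤ 0), min_eq_left (max_le h hc), sub_zero]
  · rw [max_eq_left (by linarith : 0 ≤ u - c), max_eq_left (hc.trans h), min_eq_right h]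
    ring

theorem hasDerivAt_smoothRamp (hc : 0 ≤ c) (u : ℝ) :
    HasDerivAt (smoothRamp c) (smoothRampDeriv c u) u := by
  have h := ((hasDerivAt_sq_max_zero u).sub
    ((hasDerivAt_sq_max_zero (u - c)).comp u ((hasDerivAt_id u).sub_const c))).div_const (2 * c)
  rw [smoothRampDeriv, ← max_zero_sub_max_sub_zero hc]
  exact h.congr_deriv (by ring)

theorem monotone_smoothRampDeriv (hc : 0 ≤ c) : Monotone (smoothRampDeriv c) :=
  fun _ _ hab => div_le_div_of_nonneg_right (min_le_min_right _ (max_le_max_right _ hab)) hc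

theorem convexOn_smoothRamp (hc : 0 ≤ c) : ConvexOn ℝ univ (smoothRamp c) := by
  refine Monotone.convexOn_univ_of_deriv
    (fun u => (hasDerivAt_smoothRamp hc u).differentiableAt) ?_
  rw [funext fun u => (hasDerivAt_smoothRamp hc u).deriv]
  exact monotone_smoothRampDeriv hc

theorem abs_smoothRampDeriv_sub_le (hc : 0 ≤ c) (a b : ℝ) :
    |smoothRampDeriv c a - smoothRampDeriv c b| ≤ c⁻¹ * |a - b| := by
  have hclamp : |min (max a 0) c - min (max b 0) c| ≤ |a - b| :=
    calc |min (max a 0) c - min (max b 0) c| ≤ max |max a 0 - max b 0| |c - c| :=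
          abs_min_sub_min_le_max _ _ _ _
      _ = |max a 0 - max b 0| := by rw [sub_self, abs_zero, max_eq_left (abs_nonneg _)]
      _ ≤ |a - b| := abs_max_sub_max_le_abs _ _ _
  rw [smoothRampDeriv, smoothRampDeriv, div_sub_div_same, abs_div, abs_of_nonneg hc,
    div_eq_inv_mul]
  exact mul_le_mul_of_nonneg_left hclamp (inv_nonneg.2 hc)

theorem smoothRamp_of_nonpos (hc : 0 ≤ c) {u : ℝ} (hu : u ≤ 0) : smoothRamp c u = 0 := by
  rw [smoothRamp, max_eq_right hu, max_eq_right (by linarith : u - c ≤ 0), sub_self, zero_div]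

theorem smoothRampDeriv_of_nonpos (hc : 0 ≤ c) {u : ℝ} (hu : u ≤ 0) :
    smoothRampDeriv c u = 0 := by
  rw [smoothRampDeriv, max_eq_right hu, min_eq_left hc, zero_div]

theorem smoothRamp_of_le (hc : 0 < c) {u : ℝ} (hu : c ≤ u) : smoothRamp c u = u - c / 2 := by
  rw [smoothRamp, max_eq_left (hc.le.trans hu), max_eq_left (by linarith : 0 ≤ u - c)]
  field_simp
  ring

theorem smoothRampDeriv_of_le (hc : 0 < c) {u : ℝ} (hu : c ≤ u) : smoothRampDeriv c u = 1 := by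
  rw [smoothRampDeriv, max_eq_left (hc.le.trans hu), min_eq_right hu, div_self hc.ne']

end SmoothRamp

section Ridge

variable {E : Type*} [NormedAddCommGroup E] [InnerProductSpace ℝ E]

noncomputable def innerAffine (v x₀ : E) (b : ℝ) : E →ᵃ[ℝ] ℝ where
  toFun y := b + ⟪v, y - x₀⟫
  linear := innerₛₗ ℝ v
  map_vadd' y w := by
    simp only [vadd_eq_add, innerₛₗ_apply_apply, add_sub_assoc, inner_add_right]
    ring

@[simp]
theorem innerAffine_apply (v x₀ : E) (b : ℝ) (y : E) :
    innerAffine v x₀ b y = b + ⟪v, y - x₀⟫ :=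
  rfl

theorem convexOn_innerAffine_add_comp {φ : ℝ → ℝ} (hφ : ConvexOn ℝ univ φ) (g v x₀ : E)
    (a b : ℝ) : ConvexOn ℝ univ fun y => innerAffine g x₀ a y + φ (innerAffine v x₀ b y) :=
  ((convexOn_id convex_univ).comp_affineMap (innerAffine g x₀ a)).add
    (hφ.comp_affineMap (innerAffine v x₀ b))

theorem norm_add_smul_sub_add_smul_le {φ' : ℝ → ℝ} {K : ℝ} (hK : 0 ≤ K)
    (hφ' : ∀ s t, |φ' s - φ' t| ≤ K * |s - t|) (g v x₀ : E) (b : ℝ) (x y : E) :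
    ‖(g + φ' (innerAffine v x₀ b x) • v) - (g + φ' (innerAffine v x₀ b y) • v)‖
      ≤ K * ‖v‖ ^ 2 * ‖x - y‖ :=
  calc ‖(g + φ' (innerAffine v x₀ b x) • v) - (g + φ' (innerAffine v x₀ b y) • v)‖
      = |φ' (innerAffine v x₀ b x) - φ' (innerAffine v x₀ b y)| * ‖v‖ := by
        rw [add_sub_add_left_eq_sub, ← sub_smul, norm_smul, Real.norm_eq_abs]
    _ ≤ K * |⟪v, x - y⟫| * ‖v‖ := by
        gcongr
        have hdiff : innerAffine v x₀ b x - innerAffine v x₀ b y = ⟪v, x - y⟫ := by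
          simp only [innerAffine_apply, inner_sub_right]
          ring
        exact hdiff ▸ hφ' _ _
    _ ≤ K * (‖v‖ * ‖x - y‖) * ‖v‖ := by gcongr; exact abs_real_inner_le_norm v (x - y)
    _ = K * ‖v‖ ^ 2 * ‖x - y‖ := by ring

variable [CompleteSpace E]

theorem HasGradientAt.add {f g : E → ℝ} {f' g' x : E} (hf : HasGradientAt f f' x)
    (hg : HasGradientAt g g' x) : HasGradientAt (fun y => f y + g y) (f' + g') x := by
  rw [hasGradientAt_iff_hasFDerivAt, map_add]
  exact hf.hasFDerivAt.add hg.hasFDerivAt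

theorem HasDerivAt.comp_hasGradientAt {f : E → ℝ} {f' x : E} {φ : ℝ → ℝ} {φ' : ℝ}
    (hφ : HasDerivAt φ φ' (f x)) (hf : HasGradientAt f f' x) :
    HasGradientAt (φ ∘ f) (φ' • f') x := by
  rw [hasGradientAt_iff_hasFDerivAt, map_smulₛₗ, RCLike.conj_to_real]
  exact hφ.comp_hasFDerivAt x hf.hasFDerivAt

theorem hasGradientAt_innerAffine (v x₀ : E) (b : ℝ) (y : E) :
    HasGradientAt (innerAffine v x₀ b) v y := by
  have heq : ⇑(innerAffine v x₀ b) = fun y => innerSL ℝ v y + (b - ⟪v, x₀⟫) := by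
    ext; simp [inner_sub_right]; ring
  rw [hasGradientAt_iff_hasFDerivAt, heq]
  exact (innerSL ℝ v).hasFDerivAt.add_const _

theorem hasGradientAt_innerAffine_add_comp {φ φ' : ℝ → ℝ} (hφ : ∀ s, HasDerivAt φ (φ' s) s)
    (g v x₀ : E) (a b : ℝ) (y : E) :
    HasGradientAt (fun y => innerAffine g x₀ a y + φ (innerAffine v x₀ b y))
      (g + φ' (innerAffine v x₀ b y) • v) y :=
  (hasGradientAt_innerAffine g x₀ a y).add
    ((hφ _).comp_hasGradientAt (hasGradientAt_innerAffine v x₀ b y))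

end Ridge

theorem two_point_smooth_convex_interpolation
    (d : ℕ) (L : ℝ) (hL : 0 < L)
    (x₁ x₂ g₁ g₂ : EuclideanSpace ℝ (Fin d)) (f₁ f₂ : ℝ)
    (h12 : f₁ ≥ f₂ + ⟪g₂, x₁ - x₂⟫ + 1 / (2 * L) * ‖g₁ - g₂‖ ^ 2)
    (h21 : f₂ ≥ f₁ + ⟪g₁, x₂ - x₁⟫ + 1 / (2 * L) * ‖g₂ - g₁‖ ^ 2) :
    ∃ (F : EuclideanSpace ℝ (Fin d) → ℝ)
      (gF : EuclideanSpace ℝ (Fin d) → EuclideanSpace ℝ (Fin d)),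
      ConvexOn ℝ Set.univ F ∧
      (∀ x, HasGradientAt F (gF x) x) ∧
      (∀ x y, ‖gF x - gF y‖ ≤ L * ‖x - y‖) ∧
      F x₁ = f₁ ∧ F x₂ = f₂ ∧ gF x₁ = g₁ ∧ gF x₂ = g₂ := by
  simp only [inner_sub_right] at h12 h21
  obtain rfl | hg := eq_or_ne g₁ g₂
  · refine ⟨innerAffine g₁ x₁ f₁, fun _ => g₁, (convexOn_id convex_univ).comp_affineMap _,
      hasGradientAt_innerAffine g₁ x₁ f₁, fun x y => by simp; positivity, by simp, ?_,
      rfl, rfl⟩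
    simp only [sub_self, norm_zero] at h12 h21
    simp only [innerAffine_apply, inner_sub_right]
    linarith
  rw [norm_sub_rev] at h12
  set v := g₂ - g₁ with hv
  have hv_pos : 0 < ‖v‖ := norm_pos_iff.2 (sub_ne_zero.2 hg.symm)
  set c := ‖v‖ ^ 2 / L with hc_def
  have hc : 0 < c := by positivity
  have hc_half : 1 / (2 * L) * ‖v‖ ^ 2 = c / 2 := by rw [hc_def]; ring
  set u := innerAffine v x₁ (f₂ - f₁ - ⟪g₂, x₂ - x₁⟫ + c / 2) with hu
  have hu₁ : u x₁ ≤ 0 := by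
    simp only [hu, innerAffine_apply, inner_sub_right]
    linarith
  have hu₂ : c ≤ u x₂ := by
    simp only [hu, hv, innerAffine_apply, inner_sub_right, inner_sub_left]
    linarith
  refine ⟨fun y => innerAffine g₁ x₁ f₁ y + smoothRamp c (u y),
    fun y => g₁ + smoothRampDeriv c (u y) • v,
    convexOn_innerAffine_add_comp (convexOn_smoothRamp hc.le) _ _ _ _ _,
    hasGradientAt_innerAffine_add_comp (hasDerivAt_smoothRamp hc.le) _ _ _ _ _,
    fun x y => ?_, ?_, ?_, ?_, ?_⟩
  · calc _ ≤ c⁻¹ * ‖v‖ ^ 2 * ‖x - y‖ :=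
          norm_add_smul_sub_add_smul_le (inv_nonneg.2 hc.le) (abs_smoothRampDeriv_sub_le hc.le)
            _ _ _ _ _ _
      _ = L * ‖x - y‖ := by rw [hc_def, inv_div, div_mul_cancel₀ _ (by positivity)]
  · simp [smoothRamp_of_nonpos hc.le hu₁]
  · dsimp only
    rw [smoothRamp_of_le hc hu₂]
    simp only [hu, hv, innerAffine_apply, inner_sub_right, inner_sub_left]
    ring
  · simp [smoothRampDeriv_of_nonpos hc.le hu₁]
  · simp [smoothRampDeriv_of_le hc hu₂, hv]
end

section
/- Let f be L-smooth and convex with minimizer x⋆ and let (xₖ) be generated by gradient descent with step-size γ = 1/L: xₖ₊₁ = xₖ - (1/L)∇f(xₖ). Then the quantities φₖ = k(f(xₖ) - f(x⋆)) + (L/2)‖xₖ - x⋆‖² satisfy φₖ₊₁ ≤ φₖ for all k ≥ 0, and consequently f(xₙ) - f(x⋆) ≤ (L/(2n))‖x₀ - x⋆‖² for all n ≥ 1. -/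
/-!
Convexity at `x⋆` and the descent inequality `f (y - L⁻¹ ∇f y) ≤ f y - ‖∇f y‖² / (2L)` given by
smoothness combine, after expanding `(L/2)‖y - L⁻¹ ∇f y - x⋆‖²`, to
`φ_{t+1}(y⁺) ≤ φ_t(y) - t ‖∇f y‖² / (2L)` for every `t ≥ 0`. Hence the potential decreases along
gradient descent, and `n (f xₙ - f x⋆) ≤ φₙ(xₙ) ≤ φ₀(x₀) = (L/2)‖x₀ - x⋆‖²`.
-/

open RealInnerProductSpace

variable {E : Type*} [NormedAddCommGroup E]

noncomputable def gdPotential (L : ℝ) (f : E → ℝ) (xs : E) (t : ℝ) (y : E) : ℝ :=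
  t * (f y - f xs) + L / 2 * ‖y - xs‖ ^ 2

lemma sub_le_div_of_gdPotential_le {L t C : ℝ} {f : E → ℝ} {xs y : E} (hL : 0 ≤ L) (ht : 0 < t)
    (h : gdPotential L f xs t y ≤ C) : f y - f xs ≤ C / t := by
  unfold gdPotential at h
  have hdist : 0 ≤ L / 2 * ‖y - xs‖ ^ 2 := by positivity
  rw [le_div_iff₀ ht, mul_comm]
  linarith

variable [InnerProductSpace ℝ E]

lemma half_mul_norm_sub_one_div_smul_sq {L : ℝ} (hL : L ≠ 0) (a v : E) :
    L / 2 * ‖a - (1 / L) • v‖ ^ 2 = L / 2 * ‖a‖ ^ 2 - ⟪a, v⟫ + 1 / (2 * L) * ‖v‖ ^ 2 := by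
  rw [norm_sub_sq_real, real_inner_smul_right, norm_smul, mul_pow, Real.norm_eq_abs, sq_abs]
  field_simp

section Smooth

variable {L : ℝ} {f : E → ℝ} {g : E → E}

lemma sufficient_decrease_of_smooth (hL : L ≠ 0)
    (hsmooth : ∀ x y, f x ≤ f y + ⟪g y, x - y⟫ + L / 2 * ‖x - y‖ ^ 2) (y : E) :
    f (y - (1 / L) • g y) ≤ f y - 1 / (2 * L) * ‖g y‖ ^ 2 := by
  have hquad := half_mul_norm_sub_one_div_smul_sq hL 0 (g y)
  rw [zero_sub, norm_neg, norm_zero, inner_zero_left] at hquad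
  have hinner : ⟪g y, (y - (1 / L) • g y) - y⟫ = -(1 / L * ‖g y‖ ^ 2) := by
    rw [sub_sub_cancel_left, inner_neg_right, real_inner_smul_right, real_inner_self_eq_norm_sq]
  have hsplit : 1 / L * ‖g y‖ ^ 2 = 2 * (1 / (2 * L) * ‖g y‖ ^ 2) := by field_simp
  have := hsmooth (y - (1 / L) • g y) y
  rw [hinner, sub_sub_cancel_left, norm_neg, hquad] at this
  linarith

lemma gdPotential_step_le (hL : 0 < L) (hconv : ∀ x y, f x ≥ f y + ⟪g y, x - y⟫)
    (hsmooth : ∀ x y, f x ≤ f y + ⟪g y, x - y⟫ + L / 2 * ‖x - y‖ ^ 2)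
    (xs y : E) {t : ℝ} (ht : 0 ≤ t) :
    gdPotential L f xs (t + 1) (y - (1 / L) • g y) ≤ gdPotential L f xs t y := by
  have hdecrease := sufficient_decrease_of_smooth hL.ne' hsmooth y
  have hcvx := hconv xs y
  have hinner : ⟪g y, xs - y⟫ = -⟪y - xs, g y⟫ := by
    rw [← neg_sub, inner_neg_right, real_inner_comm]
  have hgain : 0 ≤ t * (1 / (2 * L) * ‖g y‖ ^ 2) := by positivity
  unfold gdPotential
  rw [sub_right_comm, half_mul_norm_sub_one_div_smul_sq hL.ne']
  linarith [mul_le_mul_of_nonneg_left hdecrease (by linarith : (0 : ℝ) ≤ t + 1)]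

lemma antitone_gdPotential (hL : 0 < L) (hconv : ∀ x y, f x ≥ f y + ⟪g y, x - y⟫)
    (hsmooth : ∀ x y, f x ≤ f y + ⟪g y, x - y⟫ + L / 2 * ‖x - y‖ ^ 2) (xs : E) {x : ℕ → E}
    (hx : ∀ k, x (k + 1) = x k - (1 / L) • g (x k)) :
    Antitone fun n : ℕ ↦ gdPotential L f xs n (x n) :=
  antitone_nat_of_succ_le fun k ↦ by
    simpa only [Nat.cast_succ, hx] using gdPotential_step_le hL hconv hsmooth xs (x k) k.cast_nonneg

end Smooth

theorem gd_potential_function_general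
    (d : ℕ) (L : ℝ) (hL : 0 < L)
    (f : EuclideanSpace ℝ (Fin d) → ℝ) (g : EuclideanSpace ℝ (Fin d) → EuclideanSpace ℝ (Fin d))
    (hconv : ∀ x y, f x ≥ f y + ⟪g y, x - y⟫)
    (hsmooth : ∀ x y, f x ≤ f y + ⟪g y, x - y⟫ + L / 2 * ‖x - y‖ ^ 2)
    (xs : EuclideanSpace ℝ (Fin d))
    (x : ℕ → EuclideanSpace ℝ (Fin d))
    (hx : ∀ k, x (k + 1) = x k - (1 / L) • g (x k)) :
    (∀ k : ℕ, (k + 1 : ℝ) * (f (x (k + 1)) - f xs) + L / 2 * ‖x (k + 1) - xs‖ ^ 2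
        ≤ (k : ℝ) * (f (x k) - f xs) + L / 2 * ‖x k - xs‖ ^ 2) ∧
    ∀ n : ℕ, 1 ≤ n → f (x n) - f xs ≤ L / (2 * n) * ‖x 0 - xs‖ ^ 2 := by
  have hanti := antitone_gdPotential hL hconv hsmooth xs hx
  refine ⟨fun k ↦ by simpa only [gdPotential, Nat.cast_succ] using hanti k.le_succ, ?_⟩
  intro n hn
  have hinit : gdPotential L f xs n (x n) ≤ L / 2 * ‖x 0 - xs‖ ^ 2 := by
    simpa [gdPotential] using hanti n.zero_le
  calc f (x n) - f xs ≤ L / 2 * ‖x 0 - xs‖ ^ 2 / n :=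
        sub_le_div_of_gdPotential_le hL.le (by exact_mod_cast hn) hinit
    _ = L / (2 * n) * ‖x 0 - xs‖ ^ 2 := by ring

theorem gd_potential_function
    (d : ℕ) (L : ℝ) (hL : 0 < L)
    (f : EuclideanSpace ℝ (Fin d) → ℝ) (g : EuclideanSpace ℝ (Fin d) → EuclideanSpace ℝ (Fin d))
    (hconv : ∀ x y, f x ≥ f y + ⟪g y, x - y⟫)
    (hsmooth : ∀ x y, f x ≤ f y + ⟪g y, x - y⟫ + L / 2 * ‖x - y‖ ^ 2)
    (xs : EuclideanSpace ℝ (Fin d)) (hstar : g xs = 0)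
    (x : ℕ → EuclideanSpace ℝ (Fin d))
    (hx : ∀ k, x (k + 1) = x k - (1 / L) • g (x k)) :
    (∀ k : ℕ, (k + 1 : ℝ) * (f (x (k + 1)) - f xs) + L / 2 * ‖x (k + 1) - xs‖ ^ 2
        ≤ (k : ℝ) * (f (x k) - f xs) + L / 2 * ‖x k - xs‖ ^ 2) ∧
    ∀ n : ℕ, 1 ≤ n → f (x n) - f xs ≤ L / (2 * n) * ‖x 0 - xs‖ ^ 2 :=
  gd_potential_function_general d L hL f g hconv hsmooth xs x hx
end
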